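/- arXiv:2304.06262 — 2 statements merged into one kernel-verified Lean document; each statement's English description precedes it below -/
import Mathlib

section
/- Let X ∈ ℝ^{N×n_s} have POD basis U ∈ ℝ^{N×n} with X̂X̂ᵀ = Σ² diagonal (X̂ = UᵀX), let η > 0, and let X̂_t = UᵀX_t. Then the unique minimizer of the Tikhonov-regularized objective ‖X̂_t - D·X̂‖² + η‖D‖² over D ∈ ℝ^{n×n} is D̂ with entries D̂_{ij} = (u_iᵀ X_t Xᵀ u_j)/(σ_j² + η), and for any n' < n the top-left n'×n' submatrix of D̂ solves the regularized problem of size n'. -/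
open Matrix

/-- Squared Frobenius norm. -/
def frob2 {m n : ℕ} (M : Matrix (Fin m) (Fin n) ℝ) : ℝ := ∑ i, ∑ j, (M i j) ^ 2

/-- The Tikhonov-regularized inferred operator, with entries
`D̂_{ij} = (uᵢᵀ Xₜ Xᵀ uⱼ)/(σⱼ² + η)`. -/
noncomputable def DhatReg {N n ns : ℕ} (U : Matrix (Fin N) (Fin n) ℝ)
    (X Xt : Matrix (Fin N) (Fin ns) ℝ) (σ : Fin n → ℝ) (η : ℝ) :
    Matrix (Fin n) (Fin n) ℝ :=
  Uᵀ * Xt * Xᵀ * U * Matrix.diagonal fun j => (σ j ^ 2 + η)⁻¹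

lemma frob2_expand {k ns : ℕ} (Y Xh : Matrix (Fin k) (Fin ns) ℝ) (s : Fin k → ℝ)
    (hs : Xh * Xhᵀ = Matrix.diagonal s) (D : Matrix (Fin k) (Fin k) ℝ) :
    frob2 (Y - D * Xh) =
      frob2 Y - 2 * ∑ i, ∑ j, D i j * (Y * Xhᵀ) i j + ∑ i, ∑ j, (D i j)^2 * s j := by
  have hgram : ∀ j l, ∑ t, Xh j t * Xh l t = Matrix.diagonal s j l := by
    intro j l
    have := congrFun (congrFun hs j) l
    simpa [Matrix.mul_apply, Matrix.transpose_apply] using this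
  unfold frob2
  have hrow : ∀ i, ∑ t, ((Y - D * Xh) i t) ^ 2 =
      ∑ t, (Y i t) ^ 2 - 2 * ∑ j, D i j * (Y * Xhᵀ) i j + ∑ j, (D i j)^2 * s j := by
    intro i
    have h1 : ∀ t, ((Y - D * Xh) i t) ^ 2 =
        (Y i t)^2 - 2 * (Y i t * ∑ j, D i j * Xh j t)
          + (∑ j, D i j * Xh j t) * (∑ l, D i l * Xh l t) := by
      intro t
      simp only [Matrix.sub_apply, Matrix.mul_apply]
      ring
    rw [Finset.sum_congr rfl fun t _ => h1 t]
    rw [Finset.sum_add_distrib, Finset.sum_sub_distrib]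
    congr 1
    · congr 1
      rw [← Finset.mul_sum]
      congr 1
      have : ∀ t, Y i t * ∑ j, D i j * Xh j t = ∑ j, D i j * (Y i t * Xh j t) := by
        intro t; rw [Finset.mul_sum]; exact Finset.sum_congr rfl fun j _ => by ring
      rw [Finset.sum_congr rfl fun t _ => this t, Finset.sum_comm]
      refine Finset.sum_congr rfl fun j _ => ?_
      rw [← Finset.mul_sum]
      simp [Matrix.mul_apply, Matrix.transpose_apply]
    · have h2 : ∀ t, (∑ j, D i j * Xh j t) * (∑ l, D i l * Xh l t)
          = ∑ j, ∑ l, (D i j * D i l) * (Xh j t * Xh l t) := by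
        intro t
        rw [Finset.sum_mul_sum]
        exact Finset.sum_congr rfl fun j _ => Finset.sum_congr rfl fun l _ => by ring
      rw [Finset.sum_congr rfl fun t _ => h2 t, Finset.sum_comm]
      refine Finset.sum_congr rfl fun j _ => ?_
      rw [Finset.sum_comm]
      have h3 : ∀ l, ∑ t, (D i j * D i l) * (Xh j t * Xh l t)
          = (D i j * D i l) * Matrix.diagonal s j l := by
        intro l; rw [← Finset.mul_sum, hgram]
      rw [Finset.sum_congr rfl fun l _ => h3 l]
      rw [Finset.sum_eq_single j]
      · rw [Matrix.diagonal_apply_eq]; ring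
      · intro l _ hl; simp [Matrix.diagonal_apply_ne' _ hl]
      · simp
  rw [Finset.sum_congr rfl fun i _ => hrow i]
  rw [Finset.sum_add_distrib, Finset.sum_sub_distrib, ← Finset.mul_sum]

lemma key {k ns : ℕ} (Y Xh : Matrix (Fin k) (Fin ns) ℝ) (s : Fin k → ℝ)
    (hs : Xh * Xhᵀ = Matrix.diagonal s) (η : ℝ) (hη : 0 < η)
    (D : Matrix (Fin k) (Fin k) ℝ)
    (hne : D ≠ Y * Xhᵀ * Matrix.diagonal (fun j => (s j + η)⁻¹)) :
    frob2 (Y - (Y * Xhᵀ * Matrix.diagonal (fun j => (s j + η)⁻¹)) * Xh)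
        + η * frob2 (Y * Xhᵀ * Matrix.diagonal (fun j => (s j + η)⁻¹)) <
      frob2 (Y - D * Xh) + η * frob2 D := by
  set Dh := Y * Xhᵀ * Matrix.diagonal (fun j => (s j + η)⁻¹) with hDh
  have hsnn : ∀ j, 0 ≤ s j := by
    intro j
    have := congrFun (congrFun hs j) j
    simp only [Matrix.mul_apply, Matrix.transpose_apply, Matrix.diagonal_apply_eq] at this
    rw [← this]
    exact Finset.sum_nonneg fun t _ => mul_self_nonneg _
  have hpos : ∀ j, 0 < s j + η := fun j => add_pos_of_nonneg_of_pos (hsnn j) hη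
  have hDhentry : ∀ i j, Dh i j = (Y * Xhᵀ) i j * (s j + η)⁻¹ := by
    intro i j
    simp [hDh, Matrix.mul_apply, Matrix.diagonal_apply, Finset.sum_ite_eq]
  have hc : ∀ i j, (Y * Xhᵀ) i j = (s j + η) * Dh i j := by
    intro i j
    rw [hDhentry, mul_comm ((Y * Xhᵀ) i j), ← mul_assoc,
      mul_inv_cancel₀ (hpos j).ne', one_mul]
  have hobj : ∀ E : Matrix (Fin k) (Fin k) ℝ,
      frob2 (Y - E * Xh) + η * frob2 E =
        frob2 Y + ∑ i, ∑ j,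
          ((s j + η) * (E i j - Dh i j)^2 - (s j + η) * (Dh i j)^2) := by
    intro E
    rw [frob2_expand Y Xh s hs E]
    unfold frob2
    have hA : η * ∑ i, ∑ j, (E i j)^2 = ∑ i, ∑ j, η * (E i j)^2 := by
      simp [Finset.mul_sum]
    have hB : (2:ℝ) * ∑ i, ∑ j, E i j * (Y * Xhᵀ) i j
        = ∑ i, ∑ j, 2 * (E i j * (Y * Xhᵀ) i j) := by
      simp [Finset.mul_sum]
    have hsum : (∑ i, ∑ j, (E i j)^2 * s j) + (∑ i, ∑ j, η * (E i j)^2)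
          - (∑ i, ∑ j, 2 * (E i j * (Y * Xhᵀ) i j))
        = ∑ i, ∑ j, ((s j + η) * (E i j - Dh i j)^2 - (s j + η) * (Dh i j)^2) := by
      rw [← Finset.sum_add_distrib, ← Finset.sum_sub_distrib]
      refine Finset.sum_congr rfl fun i _ => ?_
      rw [← Finset.sum_add_distrib, ← Finset.sum_sub_distrib]
      refine Finset.sum_congr rfl fun j _ => ?_
      rw [hc i j]
      ring
    linarith
  rw [hobj D, hobj Dh]
  have hwit : ∃ i j, D i j ≠ Dh i j := by
    by_contra h
    push_neg at h
    exact hne (by ext i j; exact h i j)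
  obtain ⟨i0, j0, hij⟩ := hwit
  have hle : ∀ i, ∑ j, ((s j + η) * (Dh i j - Dh i j)^2 - (s j + η) * (Dh i j)^2)
      ≤ ∑ j, ((s j + η) * (D i j - Dh i j)^2 - (s j + η) * (Dh i j)^2) := by
    intro i
    refine Finset.sum_le_sum fun j _ => ?_
    have := mul_nonneg (hpos j).le (sq_nonneg (D i j - Dh i j))
    nlinarith [sq_nonneg (Dh i j - Dh i j)]
  have hlt : ∑ j, ((s j + η) * (Dh i0 j - Dh i0 j)^2 - (s j + η) * (Dh i0 j)^2)
      < ∑ j, ((s j + η) * (D i0 j - Dh i0 j)^2 - (s j + η) * (Dh i0 j)^2) := by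
    refine Finset.sum_lt_sum (fun j _ => ?_) ⟨j0, Finset.mem_univ _, ?_⟩
    · have := mul_nonneg (hpos j).le (sq_nonneg (D i0 j - Dh i0 j))
      nlinarith
    · have h1 : 0 < (D i0 j0 - Dh i0 j0)^2 := by
        have h2 := sub_ne_zero.mpr hij
        exact sq_pos_of_ne_zero h2
      have := mul_pos (hpos j0) h1
      nlinarith
  have := Finset.sum_lt_sum (fun i _ => hle i) ⟨i0, Finset.mem_univ _, hlt⟩
  linarith


/-- Tikhonov-regularized OpInf with a POD basis: `D̂` is the unique minimizer of
`‖X̂ₜ - D X̂‖² + η‖D‖²`, and its leading submatrix solves the truncated problem. -/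
theorem opinf_truncation_tikhonov {N n ns n' : ℕ} (hn' : n' < n)
    (X Xt : Matrix (Fin N) (Fin ns) ℝ) (U : Matrix (Fin N) (Fin n) ℝ)
    (hU : Uᵀ * U = 1) (σ : Fin n → ℝ) (η : ℝ) (hη : 0 < η)
    (hXXt : Uᵀ * X * (Uᵀ * X)ᵀ = Matrix.diagonal fun i => σ i ^ 2) :
    (∀ D : Matrix (Fin n) (Fin n) ℝ, D ≠ DhatReg U X Xt σ η →
        frob2 (Uᵀ * Xt - DhatReg U X Xt σ η * (Uᵀ * X)) + η * frob2 (DhatReg U X Xt σ η) <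
          frob2 (Uᵀ * Xt - D * (Uᵀ * X)) + η * frob2 D) ∧
      (∀ D : Matrix (Fin n') (Fin n') ℝ,
        D ≠ (DhatReg U X Xt σ η).submatrix (Fin.castLE hn'.le) (Fin.castLE hn'.le) →
        frob2 ((U.submatrix id (Fin.castLE hn'.le))ᵀ * Xt -
            (DhatReg U X Xt σ η).submatrix (Fin.castLE hn'.le) (Fin.castLE hn'.le) *
              ((U.submatrix id (Fin.castLE hn'.le))ᵀ * X)) +
            η * frob2 ((DhatReg U X Xt σ η).submatrix (Fin.castLE hn'.le) (Fin.castLE hn'.le)) <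
          frob2 ((U.submatrix id (Fin.castLE hn'.le))ᵀ * Xt -
            D * ((U.submatrix id (Fin.castLE hn'.le))ᵀ * X)) + η * frob2 D) := by
  
  have hD0 : DhatReg U X Xt σ η =
      (Uᵀ * Xt) * (Uᵀ * X)ᵀ * Matrix.diagonal (fun j => (σ j ^ 2 + η)⁻¹) := by
    simp [DhatReg, Matrix.transpose_mul, Matrix.mul_assoc]
  constructor
  · intro D hne
    rw [hD0] at hne ⊢
    exact key (Uᵀ * Xt) (Uᵀ * X) (fun i => σ i ^ 2) hXXt η hη D hne
  · set c : Fin n' → Fin n := Fin.castLE hn'.le with hcdef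
    have hcinj : Function.Injective c := Fin.castLE_injective _
    have hY' : (U.submatrix id c)ᵀ * Xt = (Uᵀ * Xt).submatrix c id := by
      ext i t; simp [Matrix.mul_apply]
    have hXh' : (U.submatrix id c)ᵀ * X = (Uᵀ * X).submatrix c id := by
      ext i t; simp [Matrix.mul_apply]
    have hgram' : ((Uᵀ * X).submatrix c id) * ((Uᵀ * X).submatrix c id)ᵀ
        = Matrix.diagonal (fun i => σ (c i) ^ 2) := by
      ext i j
      have h := congrFun (congrFun hXXt (c i)) (c j)
      simp only [Matrix.mul_apply, Matrix.transpose_apply, Matrix.submatrix_apply, id] at h ⊢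
      rw [h]
      by_cases hij : i = j
      · subst hij; simp
      · rw [Matrix.diagonal_apply_ne _ (fun hc => hij (hcinj hc)),
          Matrix.diagonal_apply_ne _ hij]
    have hDsub : (DhatReg U X Xt σ η).submatrix c c =
        ((Uᵀ * Xt).submatrix c id) * (((Uᵀ * X).submatrix c id))ᵀ *
          Matrix.diagonal (fun j => ((fun i => σ (c i) ^ 2) j + η)⁻¹) := by
      rw [hD0]
      ext i j
      rw [Matrix.submatrix_apply, Matrix.mul_diagonal, Matrix.mul_diagonal]
      simp [Matrix.mul_apply]
    intro D hne
    rw [hDsub] at hne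
    rw [hY', hXh', hDsub]
    exact key ((Uᵀ * Xt).submatrix c id) ((Uᵀ * X).submatrix c id)
      (fun i => σ (c i) ^ 2) hgram' η hη D hne
end

section
/- Let U ∈ ℝ^{N×n} have orthonormal columns, and suppose Â = UᵀAU ∈ ℝ^{n×n} and B̂B̂ᵀ ∈ ℝ^{n×n} are both diagonal, where B̂ = UᵀB. Let D̂ ∈ ℝ^{n×n} be the unique solution of min ‖Ĉ - Â·D·B̂‖² subject to Dᵀ = ±D, with Ĉ = UᵀC. Then for any n' < n, the top-left n'×n' submatrix D̂' of D̂ is the unique solution of the corresponding constrained problem min ‖Ĉ' - Â'·D·B̂'‖² subject to Dᵀ = ±D over D ∈ ℝ^{n'×n'}, where Â', B̂', Ĉ' are formed by removing the last n - n' columns of U in every multiplication. -/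
/-!
Because `Â` and `B̂B̂ᵀ` are diagonal, `‖Ĉ - ÂDB̂‖²` equals `‖Ĉ‖²` plus a sum of terms each of
which depends on a single entry `D i j`. The truncated data `Â'`, `B̂'`, `Ĉ'` are leading
submatrices of `Â`, `B̂`, `Ĉ`, so the truncated objective consists of exactly the terms of the
leading block. Hence replacing the leading block of `D` by `E` changes the full objective by the
change of the truncated objective from the leading block of `D` to `E`. Block replacement
preserves `ε`-symmetry, so minimality and uniqueness pass to the truncated problem.
-/

open Matrix

section Splice

/- `splice y x` overwrites the part of `x` that `restrict` reads with `y`; `hΦ` says that `Φ`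
is additive along this decomposition, with `Ψ` measuring the overwritten part. -/

variable {X Y : Type*} {Φ : X → ℝ} {Ψ : Y → ℝ} {restrict : X → Y} {splice : Y → X → X}
  {S : Set X} {T : Set Y} {x₀ : X}

theorem IsMinOn.restrict_of_splice (hΦ : ∀ y x, Φ (splice y x) = Φ x + Ψ y - Ψ (restrict x))
    (hsplice : ∀ y ∈ T, ∀ x ∈ S, splice y x ∈ S) (hx₀ : x₀ ∈ S) (hmin : IsMinOn Φ S x₀) :
    IsMinOn Ψ T (restrict x₀) :=
  isMinOn_iff.2 fun y hy => by
    have := isMinOn_iff.1 hmin _ (hsplice y hy x₀ hx₀)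
    rw [hΦ] at this
    linarith

theorem eq_restrict_of_isMinOn_of_splice (hΦ : ∀ y x, Φ (splice y x) = Φ x + Ψ y - Ψ (restrict x))
    (hsplice : ∀ y ∈ T, ∀ x ∈ S, splice y x ∈ S) (hrestrict : ∀ x ∈ S, restrict x ∈ T)
    (hrestrict_splice : ∀ y x, restrict (splice y x) = y) (hx₀ : x₀ ∈ S) (hmin : IsMinOn Φ S x₀)
    (huniq : ∀ x ∈ S, IsMinOn Φ S x → x = x₀) {y : Y} (hy : y ∈ T) (hymin : IsMinOn Ψ T y) :
    y = restrict x₀ := by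
  have hspliced_min : IsMinOn Φ S (splice y x₀) := isMinOn_iff.2 fun x hx => by
    have h₁ := isMinOn_iff.1 hmin _ (hsplice _ (hrestrict x₀ hx₀) x hx)
    have h₂ := isMinOn_iff.1 hymin _ (hrestrict x hx)
    rw [hΦ] at h₁ ⊢
    linarith
  rw [← hrestrict_splice y x₀, huniq _ (hsplice y hy x₀ hx₀) hspliced_min]

end Splice

theorem Function.Injective.sum_comp_extend {α β γ M : Type*} [Fintype α] [Fintype β]
    [AddCommGroup M] {f : α → β} (hf : f.Injective) (g : α → γ) (h : β → γ) (φ : β → γ → M) :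
    ∑ b, φ b (extend f g h b) = ∑ b, φ b (h b) + ∑ a, (φ (f a) (g a) - φ (f a) (h (f a))) := by
  rw [← sub_eq_iff_eq_add', ← Finset.sum_sub_distrib]
  refine (Fintype.sum_of_injective f hf _ _ (fun b hb => ?_) fun a => by rw [hf.extend_apply]).symm
  rw [extend_apply' _ _ _ (by simpa using hb), sub_self]

section BlockUpdate

variable {m n α : Type*}

noncomputable def Matrix.blockUpdate (e : m → n) (D : Matrix n n α) (E : Matrix m m α) :
    Matrix n n α :=
  of fun i j => Function.extend (Prod.map e e) (fun p => E p.1 p.2) (fun p => D p.1 p.2) (i, j)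

variable {e : m → n} (he : e.Injective) (D : Matrix n n α) (E : Matrix m m α)

include he in
theorem Matrix.submatrix_blockUpdate : (D.blockUpdate e E).submatrix e e = E := by
  ext a b
  simp [blockUpdate, ← Prod.map_apply, (he.prodMap he).extend_apply]

include he in
theorem Matrix.transpose_blockUpdate : (D.blockUpdate e E)ᵀ = Dᵀ.blockUpdate e Eᵀ := by
  ext i j
  by_cases hji : ∃ p : m × m, Prod.map e e p = (j, i)
  · obtain ⟨⟨a, b⟩, hab⟩ := hji
    simp only [Prod.map_apply, Prod.mk.injEq] at hab
    obtain ⟨rfl, rfl⟩ := hab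
    simp [blockUpdate, ← Prod.map_apply, (he.prodMap he).extend_apply]
  · have hij : ¬∃ p : m × m, Prod.map e e p = (i, j) := fun ⟨p, hp⟩ =>
      hji ⟨p.swap, by simp_all [Prod.ext_iff]⟩
    simp [blockUpdate, Function.extend_apply' _ _ _ hij, Function.extend_apply' _ _ _ hji]

theorem Matrix.smul_blockUpdate {R : Type*} [SMul R α] (r : R) :
    r • D.blockUpdate e E = (r • D).blockUpdate e (r • E) := by
  ext i j
  exact congrFun (Function.extend_smul r (Prod.map e e) (fun p => E p.1 p.2)
    (fun p => D p.1 p.2)).symm (i, j)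

include he in
theorem Matrix.sum_sum_blockUpdate [Fintype m] [Fintype n] {M : Type*} [AddCommGroup M]
    (φ : n → n → α → M) :
    ∑ i, ∑ j, φ i j (D.blockUpdate e E i j) = ∑ i, ∑ j, φ i j (D i j) +
      ∑ a, ∑ b, (φ (e a) (e b) (E a b) - φ (e a) (e b) (D (e a) (e b))) := by
  simp only [← Fintype.sum_prod_type']
  exact (he.prodMap he).sum_comp_extend (fun p => E p.1 p.2) (fun p => D p.1 p.2) fun p => φ p.1 p.2

end BlockUpdate

section Frobenius
variable {p q : ℕ}

theorem frob2_sub (M N : Matrix (Fin p) (Fin q) ℝ) :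
    frob2 (M - N) = frob2 M - 2 * ∑ i, ∑ k, M i k * N i k + frob2 N := by
  simp only [frob2, Matrix.sub_apply, Finset.mul_sum, ← Finset.sum_sub_distrib,
    ← Finset.sum_add_distrib]
  exact Finset.sum_congr rfl fun i _ => Finset.sum_congr rfl fun k _ => by ring

theorem Matrix.sum_mul_mul_apply {l m n α : Type*} [Fintype m] [Fintype n] [CommSemiring α]
    (C : Matrix l n α) (D : Matrix l m α) (B : Matrix m n α) (i : l) :
    ∑ k, C i k * (D * B) i k = ∑ j, (C * Bᵀ) i j * D i j := by
  simp only [mul_apply, transpose_apply, Finset.mul_sum, Finset.sum_mul]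
  rw [Finset.sum_comm]
  exact Finset.sum_congr rfl fun j _ => Finset.sum_congr rfl fun k _ => by ring

theorem Matrix.sum_mul_apply_sq {l m n α : Type*} [Fintype m] [Fintype n] [DecidableEq m]
    [CommRing α] (D : Matrix l m α) (B : Matrix m n α) (hB : (B * Bᵀ).IsDiag) (i : l) :
    ∑ k, (D * B) i k ^ 2 = ∑ j, (B * Bᵀ) j j * D i j ^ 2 := calc
  ∑ k, (D * B) i k ^ 2 = (D * B * (D * B)ᵀ) i i := by simp only [mul_apply, transpose_apply, sq]
  _ = (D * (B * Bᵀ) * Dᵀ) i i := by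
    simp only [transpose_mul, Matrix.mul_assoc]
  _ = ∑ j, (B * Bᵀ) j j * D i j ^ 2 := by
    conv_lhs => rw [← hB.diagonal_diag]
    rw [mul_apply]
    simp only [mul_diagonal, transpose_apply, diag_apply]
    exact Finset.sum_congr rfl fun j _ => by ring

theorem frob2_sub_mul_mul_of_isDiag (C : Matrix (Fin p) (Fin q) ℝ) (A D : Matrix (Fin p) (Fin p) ℝ)
    (B : Matrix (Fin p) (Fin q) ℝ) (hA : A.IsDiag) (hB : (B * Bᵀ).IsDiag) :
    frob2 (C - A * D * B) = frob2 C + ∑ i, ∑ j,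
      (A i i ^ 2 * (B * Bᵀ) j j * D i j ^ 2 - 2 * A i i * (C * Bᵀ) i j * D i j) := by
  have hADB : ∀ i k, (A * D * B) i k = A i i * (D * B) i k := fun i k => by
    conv_lhs => rw [← hA.diagonal_diag]
    rw [Matrix.mul_assoc, diagonal_mul, diag_apply]
  have hcross : ∀ i, ∑ k, C i k * (A * D * B) i k = A i i * ∑ j, (C * Bᵀ) i j * D i j := fun i => by
    simp only [hADB, mul_left_comm _ (A i i), ← Finset.mul_sum, sum_mul_mul_apply]
  have hsq : ∀ i, ∑ k, (A * D * B) i k ^ 2 = A i i ^ 2 * ∑ j, (B * Bᵀ) j j * D i j ^ 2 :=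
      fun i => by
    simp only [hADB, mul_pow, ← Finset.mul_sum, sum_mul_apply_sq D B hB]
  rw [frob2_sub, sub_add_eq_add_sub, add_sub_assoc]
  congr 1
  simp only [frob2, hcross, hsq, Finset.mul_sum, ← Finset.sum_sub_distrib]
  exact Finset.sum_congr rfl fun i _ => Finset.sum_congr rfl fun j _ => by ring

end Frobenius

theorem frob2_sub_mul_blockUpdate_mul {m n q : ℕ} {e : Fin m → Fin n} (he : e.Injective)
    (C : Matrix (Fin n) (Fin q) ℝ) (A D : Matrix (Fin n) (Fin n) ℝ) (B : Matrix (Fin n) (Fin q) ℝ)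
    (E : Matrix (Fin m) (Fin m) ℝ) (hA : A.IsDiag) (hB : (B * Bᵀ).IsDiag) :
    frob2 (C - A * D.blockUpdate e E * B) = frob2 (C - A * D * B) +
      frob2 (C.submatrix e id - A.submatrix e e * E * B.submatrix e id) -
      frob2 (C.submatrix e id - A.submatrix e e * D.submatrix e e * B.submatrix e id) := by
  have hsub : ∀ M : Matrix (Fin n) (Fin q) ℝ,
      M.submatrix e id * (B.submatrix e id)ᵀ = (M * Bᵀ).submatrix e e := fun M => by
    rw [transpose_submatrix, submatrix_mul _ _ _ id _ Function.bijective_id]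
  have hB' : (B.submatrix e id * (B.submatrix e id)ᵀ).IsDiag := by
    rw [hsub]; exact hB.submatrix he
  have hsplit := sum_sum_blockUpdate he D E fun i j x =>
    A i i ^ 2 * (B * Bᵀ) j j * x ^ 2 - 2 * A i i * (C * Bᵀ) i j * x
  beta_reduce at hsplit
  simp only [frob2_sub_mul_mul_of_isDiag _ _ _ _ hA hB,
    frob2_sub_mul_mul_of_isDiag _ _ _ _ (hA.submatrix he) hB', hsub, submatrix_apply]
  rw [hsplit]
  simp only [Finset.sum_sub_distrib]
  ring

theorem Matrix.transpose_submatrix_id_mul {l m n p α : Type*} [Fintype l] [Mul α]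
    [AddCommMonoid α] (U : Matrix l n α) (M : Matrix l p α) (e : m → n) :
    (U.submatrix id e)ᵀ * M = (Uᵀ * M).submatrix e id := by
  rw [transpose_submatrix, submatrix_mul _ _ _ id _ Function.bijective_id, submatrix_id_id]

theorem Matrix.transpose_submatrix_id_mul_mul {l m n α : Type*} [Fintype l] [Fintype n]
    [NonUnitalNonAssocSemiring α]
    (U : Matrix l n α) (A : Matrix l l α) (e : m → n) :
    (U.submatrix id e)ᵀ * A * U.submatrix id e = (Uᵀ * A * U).submatrix e e := by
  rw [transpose_submatrix_id_mul, submatrix_mul (Uᵀ * A) U e id e Function.bijective_id]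

theorem constrained_opinf_truncation_general {N n ns n' : ℕ} (hn' : n' < n)
    (U : Matrix (Fin N) (Fin n) ℝ)
    (A : Matrix (Fin N) (Fin N) ℝ) (B C : Matrix (Fin N) (Fin ns) ℝ)
    (ε : ℝ)
    (hAdiag : (Uᵀ * A * U).IsDiag) (hBdiag : ((Uᵀ * B) * (Uᵀ * B)ᵀ).IsDiag)
    (Dh : Matrix (Fin n) (Fin n) ℝ) (hDsym : Dhᵀ = ε • Dh)
    (hDmin : ∀ D : Matrix (Fin n) (Fin n) ℝ, Dᵀ = ε • D →
      frob2 (Uᵀ * C - (Uᵀ * A * U) * Dh * (Uᵀ * B)) ≤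
        frob2 (Uᵀ * C - (Uᵀ * A * U) * D * (Uᵀ * B)))
    (hDuniq : ∀ D : Matrix (Fin n) (Fin n) ℝ, Dᵀ = ε • D →
      (∀ D' : Matrix (Fin n) (Fin n) ℝ, D'ᵀ = ε • D' →
        frob2 (Uᵀ * C - (Uᵀ * A * U) * D * (Uᵀ * B)) ≤
          frob2 (Uᵀ * C - (Uᵀ * A * U) * D' * (Uᵀ * B))) → D = Dh) :
    (Dh.submatrix (Fin.castLE hn'.le) (Fin.castLE hn'.le))ᵀ =
        ε • Dh.submatrix (Fin.castLE hn'.le) (Fin.castLE hn'.le) ∧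
    (∀ D : Matrix (Fin n') (Fin n') ℝ, Dᵀ = ε • D →
      frob2 ((U.submatrix id (Fin.castLE hn'.le))ᵀ * C -
          ((U.submatrix id (Fin.castLE hn'.le))ᵀ * A * U.submatrix id (Fin.castLE hn'.le)) *
            Dh.submatrix (Fin.castLE hn'.le) (Fin.castLE hn'.le) *
            ((U.submatrix id (Fin.castLE hn'.le))ᵀ * B)) ≤
        frob2 ((U.submatrix id (Fin.castLE hn'.le))ᵀ * C -
          ((U.submatrix id (Fin.castLE hn'.le))ᵀ * A * U.submatrix id (Fin.castLE hn'.le)) *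
            D * ((U.submatrix id (Fin.castLE hn'.le))ᵀ * B))) ∧
    (∀ D : Matrix (Fin n') (Fin n') ℝ, Dᵀ = ε • D →
      (∀ D' : Matrix (Fin n') (Fin n') ℝ, D'ᵀ = ε • D' →
        frob2 ((U.submatrix id (Fin.castLE hn'.le))ᵀ * C -
            ((U.submatrix id (Fin.castLE hn'.le))ᵀ * A * U.submatrix id (Fin.castLE hn'.le)) *
              D * ((U.submatrix id (Fin.castLE hn'.le))ᵀ * B)) ≤
          frob2 ((U.submatrix id (Fin.castLE hn'.le))ᵀ * C -
            ((U.submatrix id (Fin.castLE hn'.le))ᵀ * A * U.submatrix id (Fin.castLE hn'.le)) *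
              D' * ((U.submatrix id (Fin.castLE hn'.le))ᵀ * B))) →
      D = Dh.submatrix (Fin.castLE hn'.le) (Fin.castLE hn'.le)) := by
  set c : Fin n' → Fin n := Fin.castLE hn'.le
  have hc : c.Injective := Fin.castLE_injective hn'.le
  simp only [transpose_submatrix_id_mul_mul]
  simp only [transpose_submatrix_id_mul]
  have hrestrict : ∀ D : Matrix (Fin n) (Fin n) ℝ, Dᵀ = ε • D →
      (D.submatrix c c)ᵀ = ε • D.submatrix c c := fun D hD => by
    rw [transpose_submatrix, hD]
    rfl
  have hsplice : ∀ E : Matrix (Fin n') (Fin n') ℝ, Eᵀ = ε • E → ∀ D : Matrix (Fin n) (Fin n) ℝ,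
      Dᵀ = ε • D → (D.blockUpdate c E)ᵀ = ε • D.blockUpdate c E := fun E hE D hD => by
    rw [transpose_blockUpdate hc, hD, hE, smul_blockUpdate]
  set Φ : Matrix (Fin n) (Fin n) ℝ → ℝ := fun D => frob2 (Uᵀ * C - Uᵀ * A * U * D * (Uᵀ * B))
  set Ψ : Matrix (Fin n') (Fin n') ℝ → ℝ := fun E =>
    frob2 ((Uᵀ * C).submatrix c id - (Uᵀ * A * U).submatrix c c * E * (Uᵀ * B).submatrix c id)
  have hΦ : ∀ E D, Φ (D.blockUpdate c E) = Φ D + Ψ E - Ψ (D.submatrix c c) := fun E D =>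
    frob2_sub_mul_blockUpdate_mul hc _ _ D _ E hAdiag hBdiag
  have hmin : IsMinOn Φ {D | Dᵀ = ε • D} Dh := isMinOn_iff.2 hDmin
  refine ⟨hrestrict Dh hDsym, isMinOn_iff.1 (hmin.restrict_of_splice hΦ hsplice hDsym), ?_⟩
  intro D hD hDmin'
  exact eq_restrict_of_isMinOn_of_splice hΦ hsplice hrestrict
    (fun E D => submatrix_blockUpdate hc D E) hDsym hmin
    (fun D' hD' hD'min => hDuniq D' hD' (isMinOn_iff.1 hD'min)) hD (isMinOn_iff.2 hDmin')

/-- Truncation property of symmetry-constrained operator inference when `Â = UᵀAU` and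
`B̂B̂ᵀ` are diagonal: the leading submatrix of the unique solution solves the truncated
constrained problem uniquely. -/
theorem constrained_opinf_truncation {N n ns n' : ℕ} (hn' : n' < n)
    (U : Matrix (Fin N) (Fin n) ℝ) (hU : Uᵀ * U = 1)
    (A : Matrix (Fin N) (Fin N) ℝ) (B C : Matrix (Fin N) (Fin ns) ℝ)
    (ε : ℝ) (hε : ε = 1 ∨ ε = -1)
    (hAdiag : (Uᵀ * A * U).IsDiag) (hBdiag : ((Uᵀ * B) * (Uᵀ * B)ᵀ).IsDiag)
    (Dh : Matrix (Fin n) (Fin n) ℝ) (hDsym : Dhᵀ = ε • Dh)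
    (hDmin : ∀ D : Matrix (Fin n) (Fin n) ℝ, Dᵀ = ε • D →
      frob2 (Uᵀ * C - (Uᵀ * A * U) * Dh * (Uᵀ * B)) ≤
        frob2 (Uᵀ * C - (Uᵀ * A * U) * D * (Uᵀ * B)))
    (hDuniq : ∀ D : Matrix (Fin n) (Fin n) ℝ, Dᵀ = ε • D →
      (∀ D' : Matrix (Fin n) (Fin n) ℝ, D'ᵀ = ε • D' →
        frob2 (Uᵀ * C - (Uᵀ * A * U) * D * (Uᵀ * B)) ≤
          frob2 (Uᵀ * C - (Uᵀ * A * U) * D' * (Uᵀ * B))) → D = Dh) :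
    (Dh.submatrix (Fin.castLE hn'.le) (Fin.castLE hn'.le))ᵀ =
        ε • Dh.submatrix (Fin.castLE hn'.le) (Fin.castLE hn'.le) ∧
    (∀ D : Matrix (Fin n') (Fin n') ℝ, Dᵀ = ε • D →
      frob2 ((U.submatrix id (Fin.castLE hn'.le))ᵀ * C -
          ((U.submatrix id (Fin.castLE hn'.le))ᵀ * A * U.submatrix id (Fin.castLE hn'.le)) *
            Dh.submatrix (Fin.castLE hn'.le) (Fin.castLE hn'.le) *
            ((U.submatrix id (Fin.castLE hn'.le))ᵀ * B)) ≤
        frob2 ((U.submatrix id (Fin.castLE hn'.le))ᵀ * C -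
          ((U.submatrix id (Fin.castLE hn'.le))ᵀ * A * U.submatrix id (Fin.castLE hn'.le)) *
            D * ((U.submatrix id (Fin.castLE hn'.le))ᵀ * B))) ∧
    (∀ D : Matrix (Fin n') (Fin n') ℝ, Dᵀ = ε • D →
      (∀ D' : Matrix (Fin n') (Fin n') ℝ, D'ᵀ = ε • D' →
        frob2 ((U.submatrix id (Fin.castLE hn'.le))ᵀ * C -
            ((U.submatrix id (Fin.castLE hn'.le))ᵀ * A * U.submatrix id (Fin.castLE hn'.le)) *
              D * ((U.submatrix id (Fin.castLE hn'.le))ᵀ * B)) ≤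
          frob2 ((U.submatrix id (Fin.castLE hn'.le))ᵀ * C -
            ((U.submatrix id (Fin.castLE hn'.le))ᵀ * A * U.submatrix id (Fin.castLE hn'.le)) *
              D' * ((U.submatrix id (Fin.castLE hn'.le))ᵀ * B))) →
      D = Dh.submatrix (Fin.castLE hn'.le) (Fin.castLE hn'.le)) :=
  constrained_opinf_truncation_general hn' U A B C ε hAdiag hBdiag Dh hDsym hDmin hDuniq
end
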